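/- Let 𝒜 ⊆ E^∞, x⃗ a finite block sequence, and X, Y block subspaces with Y ⊆* X. If II has a strategy in the relational game A_X(x⃗) to play in 𝒜, then II has a strategy in A_Y(x⃗) to play in 𝒜. -/

import Mathlib

section Defs

variable {𝔽 : Type} [Field 𝔽] {E : Type} [AddCommGroup E] [Module 𝔽 E]

/-- The support of a vector with respect to the basis `b`. -/
noncomputable def supp (b : Module.Basis ℕ 𝔽 E) (x : E) : Finset ℕ :=
  (b.repr x).support

/-- `VecLt b x y` means `x < y`: every element of the support of `x` is smaller than
every element of the support of `y`. -/
def VecLt (b : Module.Basis ℕ 𝔽 E) (x y : E) : Prop :=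
  ∀ m ∈ supp b x, ∀ n ∈ supp b y, m < n

/-- `NatLt b k x` means `k < x`: `k` is smaller than every element of the support of `x`. -/
def NatLt (b : Module.Basis ℕ 𝔽 E) (k : ℕ) (x : E) : Prop :=
  ∀ n ∈ supp b x, k < n

/-- An infinite block sequence: a sequence of nonzero vectors with `x n < x (n + 1)`. -/
def IsBlockSeq (b : Module.Basis ℕ 𝔽 E) (x : ℕ → E) : Prop :=
  (∀ n, x n ≠ 0) ∧ ∀ n, VecLt b (x n) (x (n + 1))

/-- A finite block sequence: a list of nonzero vectors, consecutively increasing in the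
block ordering. -/
def IsFinBlockSeq (b : Module.Basis ℕ 𝔽 E) (l : List E) : Prop :=
  (∀ x ∈ l, x ≠ 0) ∧ l.Chain' (VecLt b)

/-- A block subspace: a subspace spanned by an infinite block sequence. -/
def IsBlockSubspace (b : Module.Basis ℕ 𝔽 E) (X : Submodule 𝔽 E) : Prop :=
  ∃ y : ℕ → E, IsBlockSeq b y ∧ X = Submodule.span 𝔽 (Set.range y)

/-- The list of the first `n` values of a sequence. -/
def hist {α : Type _} (x : ℕ → α) (n : ℕ) : List α :=
  List.ofFn (fun j : Fin n => x j)

/-- The concatenation of a finite prefix with an infinite sequence. -/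
def prefCat {α : Type _} (l : List α) (x : ℕ → α) : ℕ → α := fun n =>
  if h : n < l.length then l.get ⟨n, h⟩ else x (n - l.length)

/-- `Y ⊆* X`: `Y` is spanned by an infinite block sequence all but finitely many of
whose terms belong to `X`. -/
def SubsetStar (b : Module.Basis ℕ 𝔽 E) (Y X : Submodule 𝔽 E) : Prop :=
  ∃ y : ℕ → E, IsBlockSeq b y ∧ Y = Submodule.span 𝔽 (Set.range y) ∧
    ∃ N : ℕ, ∀ m, N ≤ m → y m ∈ X

/-- The interleaving `x 0, y 0, x 1, y 1, …` of two sequences. -/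
def interleave {α : Type _} (x y : ℕ → α) : ℕ → α := fun k =>
  if k % 2 = 0 then x (k / 2) else y (k / 2)

/-- Helper: the sequence of integers produced by a strategy answering plays
`p i : E × Submodule 𝔽 E` with a vector and an integer, starting with `n0`. -/
def natsA (n0 : ℕ) (σ : List (E × Submodule 𝔽 E) → E × ℕ)
    (p : ℕ → E × Submodule 𝔽 E) : ℕ → ℕ
  | 0 => n0
  | k + 1 => (σ (hist p (k + 1))).2

/-- Player II has a strategy in the relational game `A_X(pre)` to play in `A`
(case of an even-length prefix): II opens with an integer `n0`; I plays nonzero vectors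
`x i ∈ X` with `n i < x i`, forming a block sequence, together with block subspaces
`Z i ≤ X`; II answers with a nonzero vector `y i ∈ Z i` (II's vectors forming a block
sequence) and the next integer `n (i+1)`, the integers being strictly increasing.  The
outcome is `pre` followed by `x 0, y 0, x 1, y 1, …`. -/
def IIWinsAEven (b : Module.Basis ℕ 𝔽 E) (X : Submodule 𝔽 E) (pre : List E)
    (A : Set (ℕ → E)) : Prop :=
  ∃ (n0 : ℕ) (σ : List (E × Submodule 𝔽 E) → E × ℕ),
    ∀ p : ℕ → E × Submodule 𝔽 E,
      (∀ i, (p i).1 ∈ X ∧ (p i).1 ≠ 0 ∧ NatLt b (natsA n0 σ p i) (p i).1 ∧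
          VecLt b (p i).1 (p (i + 1)).1 ∧ IsBlockSubspace b (p i).2 ∧ (p i).2 ≤ X) →
      (∀ i, (σ (hist p (i + 1))).1 ∈ (p i).2 ∧ (σ (hist p (i + 1))).1 ≠ 0 ∧
          VecLt b (σ (hist p (i + 1))).1 (σ (hist p (i + 2))).1 ∧
          natsA n0 σ p i < natsA n0 σ p (i + 1)) ∧
        prefCat pre
          (interleave (fun i => (p i).1) (fun i => (σ (hist p (i + 1))).1)) ∈ A

/-- Player II has a strategy in the relational game `A_X(pre)` to play in `A`
(case of an odd-length prefix): I plays block subspaces `Z i ≤ X` together with nonzero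
vectors `x i ∈ X` (to accompany `Z (i+1)`) with `n i < x i`, the `x i` forming a block
sequence; II answers `Z i` with a nonzero vector `y i ∈ Z i` (II's vectors forming a
block sequence) and a strictly increasing integer `n i`.  The outcome is `pre` followed
by `y 0, x 0, y 1, x 1, …`. -/
def IIWinsAOdd (b : Module.Basis ℕ 𝔽 E) (X : Submodule 𝔽 E) (pre : List E)
    (A : Set (ℕ → E)) : Prop :=
  ∃ σ : List (Submodule 𝔽 E × E) → Submodule 𝔽 E → E × ℕ,
    ∀ (Z : ℕ → Submodule 𝔽 E) (x : ℕ → E),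
      (∀ i, IsBlockSubspace b (Z i) ∧ Z i ≤ X ∧ x i ∈ X ∧ x i ≠ 0 ∧
          NatLt b (σ (hist (fun j => (Z j, x j)) i) (Z i)).2 (x i) ∧
          VecLt b (x i) (x (i + 1))) →
      (∀ i, (σ (hist (fun j => (Z j, x j)) i) (Z i)).1 ∈ Z i ∧
          (σ (hist (fun j => (Z j, x j)) i) (Z i)).1 ≠ 0 ∧
          VecLt b (σ (hist (fun j => (Z j, x j)) i) (Z i)).1
            (σ (hist (fun j => (Z j, x j)) (i + 1)) (Z (i + 1))).1 ∧
          (σ (hist (fun j => (Z j, x j)) i) (Z i)).2 <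
            (σ (hist (fun j => (Z j, x j)) (i + 1)) (Z (i + 1))).2) ∧
        prefCat pre
          (interleave (fun i => (σ (hist (fun j => (Z j, x j)) i) (Z i)).1) x) ∈ A

/-- Player II has a strategy in the relational game `A_X(pre)` to play in `A`. -/
def IIWinsA (b : Module.Basis ℕ 𝔽 E) (X : Submodule 𝔽 E) (pre : List E)
    (A : Set (ℕ → E)) : Prop :=
  if pre.length % 2 = 0 then IIWinsAEven b X pre A else IIWinsAOdd b X pre A

end Defs

/-!
By `Y ⊆* X` there is a `K` such that every vector of `Y` supported above `K` lies in `X`.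
II then plays the `A_Y` game by simulating a winning strategy for `A_X`: every integer the
strategy announces is raised by `K + 1`, so that I's vectors, which lie in `Y` above these
integers, are legal moves in `X`; and every block subspace `Z ≤ Y` played by I is replaced by
the span of a tail of its block basis lying above `K`, which is a block subspace of `X`
contained in `Z`, so that the strategy's answers remain legal in `A_Y`.
-/

section Support

variable {𝔽 : Type} [Field 𝔽] {E : Type} [AddCommGroup E] [Module 𝔽 E]
  {b : Module.Basis ℕ 𝔽 E}

variable (b) in
lemma supp_nonempty {x : E} (hx : x ≠ 0) : (supp b x).Nonempty := by
  rw [supp, Finsupp.support_nonempty_iff]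
  simpa using hx

lemma NatLt.mono {k k' : ℕ} {x : E} (hk : k ≤ k') (h : NatLt b k' x) : NatLt b k x :=
  fun n hn => hk.trans_lt (h n hn)

lemma VecLt.trans {x y z : E} (h₁ : VecLt b x y) (hy : y ≠ 0) (h₂ : VecLt b y z) :
    VecLt b x z := by
  obtain ⟨a, ha⟩ := supp_nonempty b hy
  exact fun m hm n hn => (h₁ m hm a ha).trans (h₂ a ha n hn)

lemma IsBlockSeq.vecLt_of_lt {z : ℕ → E} (hz : IsBlockSeq b z) {i j : ℕ} (h : i < j) :
    VecLt b (z i) (z j) := by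
  induction h with
  | refl => exact hz.2 i
  | step _ ih => exact ih.trans (hz.1 _) (hz.2 _)

lemma IsBlockSeq.le_of_mem_supp {z : ℕ → E} (hz : IsBlockSeq b z) :
    ∀ j, ∀ n ∈ supp b (z j), j ≤ n
  | 0, _, _ => Nat.zero_le _
  | j + 1, n, hn => by
    obtain ⟨a, ha⟩ := supp_nonempty b (hz.1 j)
    exact (hz.le_of_mem_supp j a ha).trans_lt (hz.2 j a ha n hn)

variable (b) in
noncomputable def suppIic (K : ℕ) : Submodule 𝔽 E :=
  (Finsupp.supported 𝔽 𝔽 (Set.Iic K)).comap (b.repr : E →ₗ[𝔽] ℕ →₀ 𝔽)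

variable (b) in
noncomputable def suppIoi (K : ℕ) : Submodule 𝔽 E :=
  (Finsupp.supported 𝔽 𝔽 (Set.Ioi K)).comap (b.repr : E →ₗ[𝔽] ℕ →₀ 𝔽)

lemma mem_suppIic_iff {K : ℕ} {v : E} : v ∈ suppIic b K ↔ ∀ n ∈ supp b v, n ≤ K := by
  simp [suppIic, Finsupp.mem_supported, Set.subset_def, supp]

lemma mem_suppIoi_iff {K : ℕ} {v : E} : v ∈ suppIoi b K ↔ NatLt b K v := by
  simp [suppIoi, Finsupp.mem_supported, Set.subset_def, supp, NatLt]

lemma disjoint_suppIic_suppIoi (K : ℕ) : Disjoint (suppIic b K) (suppIoi b K) := by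
  rw [Submodule.disjoint_def]
  intro v hle hgt
  by_contra hv
  obtain ⟨n, hn⟩ := supp_nonempty b hv
  exact (mem_suppIic_iff.1 hle n hn).not_gt (mem_suppIoi_iff.1 hgt n hn)

lemma SubsetStar.exists_inf_suppIoi_le {X Y : Submodule 𝔽 E} (h : SubsetStar b Y X) :
    ∃ K, Y ⊓ suppIoi b K ≤ X := by
  obtain ⟨y, hy, rfl, N, hN⟩ := h
  have hne := supp_nonempty b (hy.1 N)
  set K := (supp b (y N)).max' hne
  have hlow : ∀ m ≤ N, y m ∈ suppIic b K := by
    intro m hm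
    refine mem_suppIic_iff.2 fun n hn => ?_
    rcases hm.lt_or_eq with hm | rfl
    · exact (hy.vecLt_of_lt hm n hn K ((supp b (y N)).max'_mem hne)).le
    · exact (supp b (y m)).le_max' n hn
  have hhigh : ∀ m, N < m → y m ∈ X ⊓ suppIoi b K := fun m hm =>
    ⟨hN m hm.le, mem_suppIoi_iff.2 (hy.vecLt_of_lt hm K ((supp b (y N)).max'_mem hne))⟩
  have hspan : Submodule.span 𝔽 (Set.range y) ≤ X ⊓ suppIoi b K ⊔ suppIic b K := by
    rw [Submodule.span_le]
    rintro _ ⟨m, rfl⟩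
    rcases le_or_gt m N with hm | hm
    · exact Submodule.mem_sup_right (hlow m hm)
    · exact Submodule.mem_sup_left (hhigh m hm)
  refine ⟨K, ?_⟩
  calc Submodule.span 𝔽 (Set.range y) ⊓ suppIoi b K
      ≤ (X ⊓ suppIoi b K ⊔ suppIic b K) ⊓ suppIoi b K := inf_le_inf_right _ hspan
    _ ≤ X ⊓ suppIoi b K ⊔ suppIic b K ⊓ suppIoi b K := sup_inf_le_assoc_of_le _ inf_le_right
    _ = X ⊓ suppIoi b K := by rw [(disjoint_suppIic_suppIoi K).eq_bot, sup_bot_eq]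
    _ ≤ X := inf_le_left

end Support

section BlockTail

variable {𝔽 : Type} [Field 𝔽] {E : Type} [AddCommGroup E] [Module 𝔽 E]
  (b : Module.Basis ℕ 𝔽 E) (K : ℕ) {Z : Submodule 𝔽 E}

open Classical in
noncomputable def blockTail (Z : Submodule 𝔽 E) : Submodule 𝔽 E :=
  if h : IsBlockSubspace b Z then Submodule.span 𝔽 (Set.range fun m => h.choose (m + K + 1))
  else Z

lemma blockTail_le (hZ : IsBlockSubspace b Z) : blockTail b K Z ≤ Z := by
  rw [blockTail, dif_pos hZ, Submodule.span_le]
  rintro _ ⟨m, rfl⟩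
  exact hZ.choose_spec.2.ge (Submodule.subset_span ⟨m + K + 1, rfl⟩)

lemma isBlockSubspace_blockTail (hZ : IsBlockSubspace b Z) :
    IsBlockSubspace b (blockTail b K Z) := by
  rw [blockTail, dif_pos hZ]
  exact ⟨_, ⟨fun m => hZ.choose_spec.1.1 _, fun m => hZ.choose_spec.1.vecLt_of_lt (by omega)⟩, rfl⟩

lemma blockTail_le_suppIoi (hZ : IsBlockSubspace b Z) : blockTail b K Z ≤ suppIoi b K := by
  rw [blockTail, dif_pos hZ, Submodule.span_le]
  rintro _ ⟨m, rfl⟩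
  exact mem_suppIoi_iff.2 fun n hn => by
    have := hZ.choose_spec.1.le_of_mem_supp (m + K + 1) n hn
    omega

lemma blockTail_le_of_inf_suppIoi_le {X Y : Submodule 𝔽 E} (hK : Y ⊓ suppIoi b K ≤ X)
    (hZ : IsBlockSubspace b Z) (hZY : Z ≤ Y) : blockTail b K Z ≤ X :=
  (le_inf ((blockTail_le b K hZ).trans hZY) (blockTail_le_suppIoi b K hZ)).trans hK

end BlockTail

section Transfer

variable {𝔽 : Type} [Field 𝔽] {E : Type} [AddCommGroup E] [Module 𝔽 E]
  {b : Module.Basis ℕ 𝔽 E} {X Y : Submodule 𝔽 E} {K : ℕ} {pre : List E} {A : Set (ℕ → E)}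

lemma hist_comp {α β : Type _} (g : α → β) (p : ℕ → α) (n : ℕ) :
    hist (g ∘ p) n = (hist p n).map g := by
  simp only [hist, List.map_ofFn]; rfl

lemma natsA_map_add (n₀ s : ℕ) (σ : List (E × Submodule 𝔽 E) → E × ℕ)
    (g : E × Submodule 𝔽 E → E × Submodule 𝔽 E) (p : ℕ → E × Submodule 𝔽 E) (i : ℕ) :
    natsA (n₀ + s) (fun l => ((σ (l.map g)).1, (σ (l.map g)).2 + s)) p i =
      natsA n₀ σ (g ∘ p) i + s := by
  cases i <;> simp [natsA, hist_comp]

lemma IIWinsAEven.mono_of_inf_suppIoi_le (h : IIWinsAEven b X pre A)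
    (hK : Y ⊓ suppIoi b K ≤ X) : IIWinsAEven b Y pre A := by
  obtain ⟨n₀, σ, hσ⟩ := h
  set g : E × Submodule 𝔽 E → E × Submodule 𝔽 E := Prod.map id (blockTail b K)
  refine ⟨n₀ + (K + 1), fun l => ((σ (l.map g)).1, (σ (l.map g)).2 + (K + 1)), fun p hp => ?_⟩
  simp only [natsA_map_add, ← hist_comp] at hp ⊢
  obtain ⟨hans, hA⟩ := hσ (g ∘ p) fun i => by
    obtain ⟨hxY, hx0, hxlt, hxx, hZ, hZY⟩ := hp i
    exact ⟨hK ⟨hxY, mem_suppIoi_iff.2 (hxlt.mono (by omega))⟩, hx0, hxlt.mono (by omega), hxx,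
      isBlockSubspace_blockTail b K hZ, blockTail_le_of_inf_suppIoi_le b K hK hZ hZY⟩
  refine ⟨fun i => ?_, hA⟩
  obtain ⟨hyZ, hy0, hyy, hlt⟩ := hans i
  exact ⟨blockTail_le b K (hp i).2.2.2.2.1 hyZ, hy0, hyy, by omega⟩

lemma IIWinsAOdd.mono_of_inf_suppIoi_le (h : IIWinsAOdd b X pre A)
    (hK : Y ⊓ suppIoi b K ≤ X) : IIWinsAOdd b Y pre A := by
  obtain ⟨σ, hσ⟩ := h
  set g : Submodule 𝔽 E × E → Submodule 𝔽 E × E := Prod.map (blockTail b K) id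
  refine ⟨fun l Z => ((σ (l.map g) (blockTail b K Z)).1,
    (σ (l.map g) (blockTail b K Z)).2 + (K + 1)), fun Z x hp => ?_⟩
  have hhist : ∀ n, (hist (fun j => (Z j, x j)) n).map g =
      hist (fun j => (blockTail b K (Z j), x j)) n := fun n => (hist_comp g _ n).symm
  simp only [hhist] at hp ⊢
  obtain ⟨hans, hA⟩ := hσ (fun i => blockTail b K (Z i)) x fun i => by
    obtain ⟨hZ, hZY, hxY, hx0, hxlt, hxx⟩ := hp i
    exact ⟨isBlockSubspace_blockTail b K hZ, blockTail_le_of_inf_suppIoi_le b K hK hZ hZY,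
      hK ⟨hxY, mem_suppIoi_iff.2 (hxlt.mono (by omega))⟩, hx0, hxlt.mono (by omega), hxx⟩
  refine ⟨fun i => ?_, hA⟩
  obtain ⟨hyZ, hy0, hyy, hlt⟩ := hans i
  exact ⟨blockTail_le b K (hp i).1 hyZ, hy0, hyy, by omega⟩

end Transfer

theorem IIWinsA_subsetStar_general
    {𝔽 : Type} [Field 𝔽]
    {E : Type} [AddCommGroup E] [Module 𝔽 E]
    (b : Module.Basis ℕ 𝔽 E) (A : Set (ℕ → E))
    (pre : List E)
    (X Y : Submodule 𝔽 E)
    (hYX : SubsetStar b Y X) (h : IIWinsA b X pre A) :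
    IIWinsA b Y pre A := by
  obtain ⟨K, hK⟩ := hYX.exists_inf_suppIoi_le
  unfold IIWinsA at h ⊢
  split_ifs at h ⊢ <;> exact h.mono_of_inf_suppIoi_le hK

theorem IIWinsA_subsetStar
    {𝔽 : Type} [Field 𝔽] [Countable 𝔽]
    {E : Type} [AddCommGroup E] [Module 𝔽 E]
    (b : Module.Basis ℕ 𝔽 E) (A : Set (ℕ → E))
    (pre : List E) (hpre : IsFinBlockSeq b pre)
    (X Y : Submodule 𝔽 E) (hX : IsBlockSubspace b X) (hY : IsBlockSubspace b Y)
    (hYX : SubsetStar b Y X) (h : IIWinsA b X pre A) :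
    IIWinsA b Y pre A :=
  IIWinsA_subsetStar_general b A pre X Y hYX h
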